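/- The Graev metric d̄ on the free abelian group A(X,∗), obtained by restricting the free-normed-space distance to A(X), is the maximal bi-invariant metric on A(X) whose restriction to X is majorized by d. -/

import Mathlib

open scoped BigOperators

/-- The free real vector space on a pointed metric space `(X, base)`:
the vector space with Hamel basis `X \ {base}` (and `base` serving as zero). -/
def FreeL (X : Type*) [MetricSpace X] (base : X) : Type _ :=
  {x : X // x ≠ base} →₀ ℝ

namespace FreeL

open Classical

variable {X : Type*} [MetricSpace X]

noncomputable instance (base : X) : AddCommGroup (FreeL X base) :=
  Finsupp.instAddCommGroup

noncomputable instance (base : X) : Module ℝ (FreeL X base) :=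
  Finsupp.module _ _

/-- The canonical embedding of `X` into `FreeL X base`, sending `base` to `0`. -/
noncomputable def δ (base : X) (x : X) : FreeL X base :=
  if h : x = base then 0 else Finsupp.single ⟨x, h⟩ 1

/-- A seminorm on the free vector space whose induced distance on `X` is majorized
by the metric `d`. -/
def IsGoodSeminorm (base : X) (p : Seminorm ℝ (FreeL X base)) : Prop :=
  ∀ x y : X, p (δ base x - δ base y) ≤ dist x y

/-- The largest seminorm on `FreeL X base` whose induced distance on `X` is
majorized by the metric of `X`. -/
noncomputable def freeNorm (base : X) (z : FreeL X base) : ℝ :=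
  ⨆ p : {p : Seminorm ℝ (FreeL X base) // IsGoodSeminorm base p}, p.1 z

end FreeL

/-!
By translation invariance `ρ a b = p (a - b)` for the group seminorm `p a = ρ a 0`, and
subadditivity gives `p (∑ mᵢ • (δ xᵢ - δ yᵢ)) ≤ ∑ |mᵢ| d(xᵢ, yᵢ)` for integers `mᵢ`. The
Arens–Eells seminorm, the infimum of `∑ |λᵢ| d(xᵢ, yᵢ)` over real representations
`z = ∑ λᵢ (δ xᵢ - δ yᵢ)`, is one of the seminorms in the supremum defining `‖·‖_{L(X)}`. So it
suffices to replace every real representation of an element of `A(X)` by an integral one that is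
no more expensive. This is integrality of flows: when the boundary is integral, every vertex
touched by a non-loop edge of fractional weight is touched by another such edge, so the fractional
edges carry a circulation; the cost is affine along it until some fractional weight becomes
integral, and one of the two directions does not increase it.
-/

open Finset

-- `(⊥ : Subring ℝ)` is the image of `ℤ` in `ℝ`.
lemma abs_eq_sign_mul_of_mem_Icc_floor_ceil {r x : ℝ} (hr : r ∉ (⊥ : Subring ℝ))
    (hx : x ∈ Set.Icc (⌊r⌋ : ℝ) ⌈r⌉) : |x| = SignType.sign r * x := by
  rcases lt_trichotomy r 0 with h | rfl | h
  · have : (⌈r⌉ : ℝ) ≤ 0 := by exact_mod_cast Int.ceil_nonpos.2 h.le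
    rw [sign_neg h, abs_of_nonpos (hx.2.trans this)]
    simp
  · exact absurd (zero_mem _) hr
  · have : (0 : ℝ) ≤ ⌊r⌋ := by exact_mod_cast Int.floor_nonneg.2 h.le
    rw [sign_pos h, abs_of_nonneg (this.trans hx.1)]
    simp

lemma exists_pos_add_mul_mem_bot {r τ : ℝ} (hr : r ∉ (⊥ : Subring ℝ)) (hτ : τ ≠ 0) :
    ∃ b > 0, r + b * τ ∈ (⊥ : Subring ℝ) ∧
      ∀ s ∈ Set.Icc 0 b, |r + s * τ| = |r| + s * (SignType.sign r * τ) := by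
  have hfloor : (⌊r⌋ : ℝ) < r :=
    (Int.floor_le r).lt_of_ne fun h => hr (Subring.mem_bot.2 ⟨_, h⟩)
  have hceil : r < ⌈r⌉ := (Int.le_ceil r).lt_of_ne fun h => hr (Subring.mem_bot.2 ⟨_, h.symm⟩)
  have hr_mem : r ∈ Set.Icc (⌊r⌋ : ℝ) ⌈r⌉ := ⟨hfloor.le, hceil.le⟩
  obtain ⟨n, hn, hb⟩ : ∃ n : ℤ, (n : ℝ) ∈ Set.Icc (⌊r⌋ : ℝ) ⌈r⌉ ∧ 0 < (n - r) / τ := by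
    rcases hτ.lt_or_gt with h | h
    · exact ⟨⌊r⌋, ⟨le_rfl, hfloor.le.trans hceil.le⟩, div_pos_of_neg_of_neg (by linarith) h⟩
    · exact ⟨⌈r⌉, ⟨hfloor.le.trans hceil.le, le_rfl⟩, div_pos (by linarith) h⟩
  have hnr : (n : ℝ) - r ≠ 0 := fun h => hτ (by simpa [h] using hb.ne')
  refine ⟨(n - r) / τ, hb, Subring.mem_bot.2 ⟨n, by field_simp; ring⟩, fun s hs => ?_⟩
  have hmem : r + s * τ ∈ Set.Icc (⌊r⌋ : ℝ) ⌈r⌉ := by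
    have := (convex_Icc _ _).add_smul_mem hr_mem (y := n - r) (by rwa [add_sub_cancel])
      (t := s / ((n - r) / τ)) ⟨div_nonneg hs.1 hb.le, (div_le_one hb).2 hs.2⟩
    convert this using 2
    rw [smul_eq_mul]
    field_simp
  rw [abs_eq_sign_mul_of_mem_Icc_floor_ceil hr hmem, mul_add, sign_mul_self]
  ring

section IntegralFlows

open Classical

variable {V ι : Type*} [Fintype ι] (src tgt : ι → V)

noncomputable def edgeBoundary : (ι → ℝ) →ₗ[ℝ] V →₀ ℝ :=
  Fintype.linearCombination ℝ fun i => Finsupp.single (src i) 1 - Finsupp.single (tgt i) 1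

noncomputable def endpoints : Finset V := univ.image src ∪ univ.image tgt

lemma edgeBoundary_apply (f : ι → ℝ) (v : V) :
    edgeBoundary src tgt f v =
      ∑ i, f i * ((if src i = v then 1 else 0) - if tgt i = v then 1 else 0) := by
  simp [edgeBoundary, Fintype.linearCombination_apply, Finsupp.single_apply]

lemma edgeBoundary_apply_of_notMem (f : ι → ℝ) {v : V} (hv : v ∉ endpoints src tgt) :
    edgeBoundary src tgt f v = 0 := by
  rw [edgeBoundary_apply]
  refine sum_eq_zero fun i _ => ?_
  have hs : src i ≠ v := fun h => hv (mem_union_left _ (mem_image.2 ⟨i, mem_univ _, h⟩))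
  have ht : tgt i ≠ v := fun h => hv (mem_union_right _ (mem_image.2 ⟨i, mem_univ _, h⟩))
  simp [hs, ht]

lemma sum_edgeBoundary_apply (f : ι → ℝ) {s : Finset V} (hs : endpoints src tgt ⊆ s) :
    ∑ v ∈ s, edgeBoundary src tgt f v = 0 := by
  simp_rw [edgeBoundary_apply]
  rw [sum_comm]
  refine sum_eq_zero fun i _ => ?_
  have hsrc : src i ∈ s := hs (mem_union_left _ (mem_image_of_mem _ (mem_univ i)))
  have htgt : tgt i ∈ s := hs (mem_union_right _ (mem_image_of_mem _ (mem_univ i)))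
  rw [← mul_sum, sum_sub_distrib, sum_ite_eq, sum_ite_eq, if_pos hsrc, if_pos htgt, sub_self,
    mul_zero]

lemma card_endpoints_le_card
    (hdeg : ∀ v ∈ endpoints src tgt, 2 ≤ #{i | src i = v ∨ tgt i = v}) :
    #(endpoints src tgt) ≤ Fintype.card ι := by
  have := card_mul_le_card_mul (fun v i => src i = v ∨ tgt i = v) hdeg fun i _ =>
    (card_le_card fun v hv => by
      rcases (mem_bipartiteBelow _).1 hv |>.2 with h | h <;> simp [h]).trans
    (card_le_two (a := src i) (b := tgt i))
  rw [card_univ] at this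
  omega

lemma card_lt_card_endpoints [Nonempty ι] (hinj : Function.Injective (edgeBoundary src tgt)) :
    Fintype.card ι < #(endpoints src tgt) := by
  set E := endpoints src tgt
  let T : (ι → ℝ) →ₗ[ℝ] (E → ℝ) :=
    LinearMap.pi (fun v : E => Finsupp.lapply v.1) ∘ₗ edgeBoundary src tgt
  have hT : Function.Injective T := fun f g hfg => hinj <| Finsupp.ext fun v => by
    by_cases hv : v ∈ E
    · exact congr_fun hfg ⟨v, hv⟩
    · rw [edgeBoundary_apply_of_notMem src tgt f hv, edgeBoundary_apply_of_notMem src tgt g hv]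
  -- boundaries have total mass zero, so the constant function `1` is not in the range of `T`
  have hT_ne_top : LinearMap.range T ≠ ⊤ := by
    intro htop
    obtain ⟨f, hf⟩ := LinearMap.range_eq_top.1 htop (fun _ => 1)
    have hsum := sum_edgeBoundary_apply src tgt f subset_rfl
    rw [← sum_coe_sort] at hsum
    have hE : E.Nonempty := (univ_nonempty.image src).mono subset_union_left
    have : ∑ v : E, (1 : ℝ) = 0 := hsum ▸ sum_congr rfl fun v _ => (congr_fun hf v).symm
    simp [hE.ne_empty] at this
  have hlt := Submodule.finrank_lt hT_ne_top
  rwa [LinearMap.finrank_range_of_inj hT, Module.finrank_fintype_fun_eq_card,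
    Module.finrank_fintype_fun_eq_card, Fintype.card_coe] at hlt

lemma exists_ne_zero_edgeBoundary_eq_zero [Nonempty ι]
    (hdeg : ∀ v ∈ endpoints src tgt, 2 ≤ #{i | src i = v ∨ tgt i = v}) :
    ∃ f ≠ 0, edgeBoundary src tgt f = 0 := by
  by_contra! h
  have hinj : Function.Injective (edgeBoundary src tgt) :=
    (injective_iff_map_eq_zero _).2 fun f hf => by_contra fun hf0 => h f hf0 hf
  exact (card_lt_card_endpoints src tgt hinj).not_ge (card_endpoints_le_card src tgt hdeg)

lemma exists_edgeBoundary_eq_zero_of_subtype (p : ι → Prop) [DecidablePred p]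
    (h : ∃ g ≠ 0, edgeBoundary (fun i : {i // p i} => src i) (fun i => tgt i) g = 0) :
    ∃ f ≠ 0, (∀ i, f i ≠ 0 → p i) ∧ edgeBoundary src tgt f = 0 := by
  obtain ⟨g, hg0, hg⟩ := h
  refine ⟨fun i => if hi : p i then g ⟨i, hi⟩ else 0, fun hf => hg0 ?_, fun i hi => ?_, ?_⟩
  · ext i
    simpa [i.2] using congr_fun hf i
  · by_contra hpi
    simp [hpi] at hi
  · have hin (i : {i // p i}) : (if hi : p i then g ⟨i, hi⟩ else 0) = g i := dif_pos i.2
    have hout (i : {i // ¬p i}) : (if hi : p i then g ⟨i, hi⟩ else 0) = 0 := dif_neg i.2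
    rw [edgeBoundary, Fintype.linearCombination_apply, ← Fintype.sum_subtype_add_sum_subtype p]
    simpa [hin, hout, edgeBoundary, Fintype.linearCombination_apply] using hg

/-- At a vertex met by a single fractional edge `i`, which is not a loop, the boundary would be
`± f i` plus an integer. -/
lemma two_le_card_incident_of_fractional (f : ι → ℝ)
    (hf : ∀ v, edgeBoundary src tgt f v ∈ (⊥ : Subring ℝ))
    (hloop : ∀ i, f i ∉ (⊥ : Subring ℝ) → src i ≠ tgt i) :
    ∀ v ∈ endpoints (fun i : {i // f i ∉ (⊥ : Subring ℝ)} => src i) (fun i => tgt i),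
      2 ≤ #{i : {i // f i ∉ (⊥ : Subring ℝ)} | src i = v ∨ tgt i = v} := by
  intro v hv
  by_contra! hlt
  obtain ⟨i, hi⟩ : ∃ i : {i // f i ∉ (⊥ : Subring ℝ)}, src i = v ∨ tgt i = v := by
    simp only [endpoints, mem_union, mem_image, mem_univ, true_and] at hv
    rcases hv with ⟨i, hi⟩ | ⟨i, hi⟩
    exacts [⟨i, .inl hi⟩, ⟨i, .inr hi⟩]
  have honly : ∀ j, f j ∉ (⊥ : Subring ℝ) → (src j = v ∨ tgt j = v) → j = i := fun j hj hjv =>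
    congr_arg Subtype.val <| card_le_one.1 (Nat.le_of_lt_succ hlt) ⟨j, hj⟩ (by simpa using hjv)
      i (by simpa using hi)
  set inc : ι → ℝ := fun j => (if src j = v then 1 else 0) - if tgt j = v then 1 else 0
  have hinc : ∀ j, inc j ∈ (⊥ : Subring ℝ) := fun j => by
    refine sub_mem ?_ ?_ <;> split_ifs <;> simp
  have hrest : ∑ j ∈ univ.erase i.1, f j * inc j ∈ (⊥ : Subring ℝ) := by
    refine sum_mem fun j hj => ?_
    by_cases hfj : f j ∈ (⊥ : Subring ℝ)
    · exact mul_mem hfj (hinc j)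
    · have hjv : ¬(src j = v ∨ tgt j = v) := fun hjv => ne_of_mem_erase hj (honly j hfj hjv)
      push Not at hjv
      simp [inc, hjv.1, hjv.2]
  have hfi : f i * inc i ∈ (⊥ : Subring ℝ) := by
    have := sub_mem (hf v) hrest
    rwa [edgeBoundary_apply, ← add_sum_erase _ _ (mem_univ i.1), add_sub_cancel_right] at this
  apply i.2
  rcases hi with h | h
  · have h' : tgt i ≠ v := h ▸ (hloop i i.2).symm
    simpa [inc, h, h'] using hfi
  · have h' : src i ≠ v := h ▸ hloop i i.2
    simpa [inc, h, h'] using neg_mem hfi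

lemma exists_edgeBoundary_eq_zero_of_fractional (f : ι → ℝ)
    (hf : ∀ v, edgeBoundary src tgt f v ∈ (⊥ : Subring ℝ)) (hfrac : ∃ i, f i ∉ (⊥ : Subring ℝ)) :
    ∃ t ≠ 0, (∀ i, t i ≠ 0 → f i ∉ (⊥ : Subring ℝ)) ∧ edgeBoundary src tgt t = 0 := by
  by_cases hloop : ∃ i, f i ∉ (⊥ : Subring ℝ) ∧ src i = tgt i
  · obtain ⟨i, hi, hii⟩ := hloop
    refine ⟨Pi.single i 1, by simp, fun j hj => ?_, ?_⟩
    · obtain rfl : j = i := by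
        by_contra hji
        exact hj (by simp [hji])
      exact hi
    · simp [edgeBoundary, Fintype.linearCombination_apply_single, hii]
  · push Not at hloop
    obtain ⟨i, hi⟩ := hfrac
    have : Nonempty {i // f i ∉ (⊥ : Subring ℝ)} := ⟨⟨i, hi⟩⟩
    exact exists_edgeBoundary_eq_zero_of_subtype src tgt _
      (exists_ne_zero_edgeBoundary_eq_zero _ _
        (two_le_card_incident_of_fractional src tgt f hf hloop))

lemma exists_pos_coord_add_mul_mem_bot (f t : ι → ℝ) (ht : t ≠ 0)
    (hfrac : ∀ i, t i ≠ 0 → f i ∉ (⊥ : Subring ℝ)) :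
    ∃ s > 0, (∃ i, t i ≠ 0 ∧ f i + s * t i ∈ (⊥ : Subring ℝ)) ∧
      ∀ i, |f i + s * t i| = |f i| + s * (SignType.sign (f i) * t i) := by
  choose! b hb_pos hb_int hb_abs using
    fun i (hi : t i ≠ 0) => exists_pos_add_mul_mem_bot (hfrac i hi) hi
  have hD : ({i | t i ≠ 0} : Finset ι).Nonempty := by
    obtain ⟨i, hi⟩ := Function.ne_iff.1 ht
    exact ⟨i, by simpa using hi⟩
  obtain ⟨i₀, hi₀, hs⟩ := exists_mem_eq_inf' hD b
  have hti₀ : t i₀ ≠ 0 := by simpa using hi₀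
  refine ⟨_, hs ▸ hb_pos i₀ hti₀, ⟨i₀, hti₀, hs ▸ hb_int i₀ hti₀⟩, fun i => ?_⟩
  by_cases hi : t i = 0
  · simp [hi]
  · exact hb_abs i hi _ ⟨(hs ▸ hb_pos i₀ hti₀).le, inf'_le _ (by simpa using hi)⟩

noncomputable def fractionalSupport (f : ι → ℝ) : Finset ι := {i | f i ∉ (⊥ : Subring ℝ)}

lemma exists_shift_cost_le_card_lt (c : ι → ℝ) (f t : ι → ℝ) (ht : t ≠ 0)
    (hfrac : ∀ i, t i ≠ 0 → f i ∉ (⊥ : Subring ℝ)) :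
    ∃ s : ℝ, ∑ i, |(f + s • t) i| * c i ≤ ∑ i, |f i| * c i ∧
      #(fractionalSupport (f + s • t)) < #(fractionalSupport f) := by
  wlog hK : ∑ i, SignType.sign (f i) * t i * c i ≤ 0 generalizing t
  · obtain ⟨s, hcost, hcard⟩ := this (-t) (neg_ne_zero.2 ht) (by simpa using hfrac)
      (by simp only [Pi.neg_apply, mul_neg, neg_mul, sum_neg_distrib]; linarith)
    exact ⟨-s, by simpa using hcost, by simpa using hcard⟩
  obtain ⟨s, hs, ⟨i₀, hti₀, hi₀⟩, habs⟩ := exists_pos_coord_add_mul_mem_bot f t ht hfrac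
  refine ⟨s, ?_, card_lt_card ?_⟩
  · calc ∑ i, |(f + s • t) i| * c i
          = ∑ i, |f i| * c i + s * ∑ i, SignType.sign (f i) * t i * c i := by
            simp only [Pi.add_apply, Pi.smul_apply, smul_eq_mul, habs, mul_sum, ← sum_add_distrib]
            exact sum_congr rfl fun i _ => by ring
      _ ≤ ∑ i, |f i| * c i := add_le_of_nonpos_right (mul_nonpos_of_nonneg_of_nonpos hs.le hK)
  · refine (ssubset_iff_of_subset fun i hi => ?_).2
      ⟨i₀, by simpa [fractionalSupport] using hfrac i₀ hti₀, by simpa [fractionalSupport] using hi₀⟩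
    simp only [fractionalSupport, mem_filter, mem_univ, true_and] at hi ⊢
    by_cases hti : t i = 0
    · simpa [hti] using hi
    · exact hfrac i hti

theorem exists_int_edgeBoundary_eq (c f : ι → ℝ)
    (hf : ∀ v, edgeBoundary src tgt f v ∈ (⊥ : Subring ℝ)) :
    ∃ m : ι → ℤ, edgeBoundary src tgt (fun i => (m i : ℝ)) = edgeBoundary src tgt f ∧
      ∑ i, |(m i : ℝ)| * c i ≤ ∑ i, |f i| * c i := by
  induction hN : #(fractionalSupport f) using Nat.strong_induction_on generalizing f with
  | _ N ih =>
  by_cases hint : ∀ i, f i ∈ (⊥ : Subring ℝ)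
  · choose m hm using fun i => Subring.mem_bot.1 (hint i)
    have hmf : (fun i => (m i : ℝ)) = f := funext hm
    exact ⟨m, by rw [hmf], by simp [hm]⟩
  · push Not at hint
    obtain ⟨t, ht0, htfrac, ht⟩ := exists_edgeBoundary_eq_zero_of_fractional src tgt f hf hint
    obtain ⟨s, hcost, hcard⟩ := exists_shift_cost_le_card_lt c f t ht0 htfrac
    have hsame : edgeBoundary src tgt (f + s • t) = edgeBoundary src tgt f := by
      rw [map_add, map_smul, ht, smul_zero, add_zero]
    obtain ⟨m, hm, hmcost⟩ := ih _ (hN ▸ hcard) (f + s • t) (hsame ▸ hf) rfl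
    exact ⟨m, hm.trans hsame, hmcost.trans hcost⟩

end IntegralFlows

def AddGroupSeminorm.ofTranslationInvariant {G : Type*} [AddCommGroup G] (ρ : G → G → ℝ)
    (h0 : ρ 0 0 = 0) (hsymm : ∀ a b, ρ a b = ρ b a) (htri : ∀ a b c, ρ a c ≤ ρ a b + ρ b c)
    (hinv : ∀ a b c, ρ (a + c) (b + c) = ρ a b) : AddGroupSeminorm G where
  toFun a := ρ a 0
  map_zero' := h0
  add_le' a b := by
    have := hinv a 0 b
    rw [zero_add] at this
    linarith [htri (a + b) b 0]
  neg' a := by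
    have := hinv (-a) 0 a
    rw [neg_add_cancel, zero_add] at this
    rw [← this, hsymm]

lemma AddGroupSeminorm.ofTranslationInvariant_sub {G : Type*} [AddCommGroup G]
    (ρ : G → G → ℝ) (h0 hsymm htri) (hinv : ∀ a b c, ρ (a + c) (b + c) = ρ a b) (a b : G) :
    ofTranslationInvariant ρ h0 hsymm htri hinv (a - b) = ρ a b := by
  have := hinv (a - b) 0 b
  rwa [sub_add_cancel, zero_add, eq_comm] at this

lemma norm_sum_zsmul_sub_le {E X ι : Type*} [SeminormedAddCommGroup E] [PseudoMetricSpace X]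
    [Fintype ι] {φ : X → E} (hφ : LipschitzWith 1 φ) (src tgt : ι → X) (m : ι → ℤ) :
    ‖∑ i, m i • (φ (src i) - φ (tgt i))‖ ≤ ∑ i, |(m i : ℝ)| * dist (src i) (tgt i) := by
  refine (norm_sum_le _ _).trans (sum_le_sum fun i _ => (norm_zsmul_le _ _).trans ?_)
  rw [Int.norm_eq_abs, ← dist_eq_norm]
  exact mul_le_mul_of_nonneg_left (by simpa using hφ.dist_le_mul (src i) (tgt i)) (abs_nonneg _)

namespace FreeL

open Classical

variable {X : Type*} [MetricSpace X] (base : X)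

lemma δ_self : δ base base = 0 := dif_pos rfl

noncomputable def proj : (X →₀ ℝ) →ₗ[ℝ] FreeL X base :=
  Finsupp.lsubtypeDomain {x | x ≠ base}

noncomputable def coord (j : {x // x ≠ base}) : FreeL X base →ₗ[ℝ] ℝ := Finsupp.lapply j

lemma coord_proj (g : X →₀ ℝ) (j : {x // x ≠ base}) : coord base j (proj base g) = g j := rfl

lemma proj_single (x : X) : proj base (Finsupp.single x 1) = δ base x := by
  refine Finsupp.ext fun j => ?_
  change Finsupp.single x (1 : ℝ) j = coord base j (δ base x)
  by_cases hx : x = base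
  · subst hx
    simp [δ, Ne.symm j.2]
  · have hδ : δ base x = (Finsupp.single (⟨x, hx⟩ : {x // x ≠ base}) (1 : ℝ) : FreeL X base) :=
      dif_neg hx
    rw [hδ]
    change _ = Finsupp.single (⟨x, hx⟩ : {x // x ≠ base}) (1 : ℝ) j
    simp [Finsupp.single_apply, Subtype.ext_iff]

lemma coord_mem_bot_of_mem_closure {z : FreeL X base}
    (hz : z ∈ AddSubgroup.closure (Set.range (δ base))) (j : {x // x ≠ base}) :
    coord base j z ∈ (⊥ : Subring ℝ) := by
  suffices AddSubgroup.closure (Set.range (δ base)) ≤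
      (⊥ : Subring ℝ).toAddSubgroup.comap (coord base j).toAddMonoidHom from this hz
  rw [AddSubgroup.closure_le]
  rintro _ ⟨x, rfl⟩
  rw [← proj_single]
  simp only [SetLike.mem_coe, AddSubgroup.mem_comap, LinearMap.toAddMonoidHom_coe, coord_proj]
  rw [Finsupp.single_apply]
  split_ifs <;> simp

lemma sum_smul_δ_sub_eq_proj {ι : Type*} [Fintype ι] (src tgt : ι → X) (f : ι → ℝ) :
    ∑ i, f i • (δ base (src i) - δ base (tgt i)) = proj base (edgeBoundary src tgt f) := by
  simp [edgeBoundary, Fintype.linearCombination_apply, proj_single]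

lemma exists_int_combination_eq {ι : Type*} [Fintype ι] (src tgt : ι → X) (f : ι → ℝ)
    (hf : ∑ i, f i • (δ base (src i) - δ base (tgt i)) ∈
      AddSubgroup.closure (Set.range (δ base))) :
    ∃ m : ι → ℤ, ∑ i, m i • (δ base (src i) - δ base (tgt i)) =
        ∑ i, f i • (δ base (src i) - δ base (tgt i)) ∧
      ∑ i, |(m i : ℝ)| * dist (src i) (tgt i) ≤ ∑ i, |f i| * dist (src i) (tgt i) := by
  rw [sum_smul_δ_sub_eq_proj] at hf ⊢
  have hoff : ∀ v ≠ base, edgeBoundary src tgt f v ∈ (⊥ : Subring ℝ) := fun v hv =>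
    coord_mem_bot_of_mem_closure base hf ⟨v, hv⟩
  -- a boundary has total mass zero, so its coordinate at `base` is integral as well
  have hbase : edgeBoundary src tgt f base ∈ (⊥ : Subring ℝ) := by
    have hsum := sum_edgeBoundary_apply src tgt f (subset_insert base _)
    rw [← add_sum_erase _ _ (mem_insert_self _ _), add_eq_zero_iff_eq_neg] at hsum
    rw [hsum]
    exact neg_mem (sum_mem fun v hv => hoff v (ne_of_mem_erase hv))
  obtain ⟨m, hm, hcost⟩ := exists_int_edgeBoundary_eq src tgt (fun i => dist (src i) (tgt i)) f
    fun v => if hv : v = base then hv ▸ hbase else hoff v hv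
  refine ⟨m, ?_, hcost⟩
  simp_rw [← Int.cast_smul_eq_zsmul ℝ]
  rw [sum_smul_δ_sub_eq_proj, hm]

noncomputable def pairBoundary : (X × X →₀ ℝ) →ₗ[ℝ] FreeL X base :=
  Finsupp.linearCombination ℝ fun p => δ base p.1 - δ base p.2

def pairCost (μ : X × X →₀ ℝ) : ℝ := μ.sum fun p r => |r| * dist p.1 p.2

lemma pairBoundary_eq_sum (μ : X × X →₀ ℝ) :
    pairBoundary base μ = ∑ p : μ.support, μ p • (δ base p.1.1 - δ base p.1.2) := by
  rw [pairBoundary, Finsupp.linearCombination_apply, Finsupp.sum, ← sum_coe_sort]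

lemma pairCost_eq_sum (μ : X × X →₀ ℝ) :
    pairCost μ = ∑ p : μ.support, |μ p| * dist p.1.1 p.1.2 := by
  rw [pairCost, Finsupp.sum, ← sum_coe_sort]

lemma pairCost_nonneg (μ : X × X →₀ ℝ) : 0 ≤ pairCost μ :=
  Finsupp.sum_nonneg fun _ _ => mul_nonneg (abs_nonneg _) dist_nonneg

lemma pairCost_add_le (μ ν : X × X →₀ ℝ) : pairCost (μ + ν) ≤ pairCost μ + pairCost ν := by
  have h0 : ∀ p ∈ μ.support ∪ ν.support, |(0 : ℝ)| * dist p.1 p.2 = 0 := by simp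
  rw [pairCost, pairCost, pairCost, Finsupp.sum_of_support_subset _ Finsupp.support_add _ h0,
    Finsupp.sum_of_support_subset _ subset_union_left _ h0,
    Finsupp.sum_of_support_subset _ subset_union_right _ h0, ← sum_add_distrib]
  exact sum_le_sum fun p _ => by
    rw [Finsupp.add_apply, ← add_mul]
    exact mul_le_mul_of_nonneg_right (abs_add_le _ _) dist_nonneg

lemma pairCost_smul (r : ℝ) (μ : X × X →₀ ℝ) : pairCost (r • μ) = |r| * pairCost μ := by
  simp [pairCost, Finsupp.sum_smul_index', Finsupp.mul_sum, abs_mul, mul_assoc]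

lemma pairBoundary_surjective : Function.Surjective (pairBoundary base) := by
  intro z
  change {x // x ≠ base} →₀ ℝ at z
  refine ⟨Finsupp.mapDomain (fun j : {x // x ≠ base} => (j.1, base)) z, ?_⟩
  have hδ (j : {x // x ≠ base}) : δ base j - δ base base = (Finsupp.single j 1 : FreeL X base) := by
    rw [δ_self, sub_zero]
    exact dif_neg j.2
  rw [pairBoundary, Finsupp.linearCombination_mapDomain, Finsupp.linearCombination_apply]
  simp only [Function.comp_apply, hδ]
  exact (Finsupp.sum_congr fun j _ => Finsupp.smul_single_one j _).trans (Finsupp.sum_single z)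

instance (z : FreeL X base) : Nonempty {μ // pairBoundary base μ = z} :=
  let ⟨μ, hμ⟩ := pairBoundary_surjective base z
  ⟨⟨μ, hμ⟩⟩

noncomputable def arensEells (z : FreeL X base) : ℝ :=
  ⨅ μ : {μ // pairBoundary base μ = z}, pairCost μ.1

lemma bddBelow_pairCost (z : FreeL X base) :
    BddBelow (Set.range fun μ : {μ // pairBoundary base μ = z} => pairCost μ.1) :=
  ⟨0, by rintro _ ⟨μ, rfl⟩; exact pairCost_nonneg μ.1⟩

lemma arensEells_le {z : FreeL X base} {μ : X × X →₀ ℝ} (hμ : pairBoundary base μ = z) :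
    arensEells base z ≤ pairCost μ :=
  ciInf_le (bddBelow_pairCost base z) ⟨μ, hμ⟩

lemma le_arensEells {z : FreeL X base} {C : ℝ}
    (h : ∀ μ, pairBoundary base μ = z → C ≤ pairCost μ) : C ≤ arensEells base z :=
  le_ciInf fun μ => h μ.1 μ.2

lemma arensEells_zero : arensEells base 0 = 0 :=
  le_antisymm (arensEells_le base (map_zero _) |>.trans_eq (by simp [pairCost]))
    (le_arensEells base fun μ _ => pairCost_nonneg μ)

lemma arensEells_add_le (z w : FreeL X base) :
    arensEells base (z + w) ≤ arensEells base z + arensEells base w :=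
  le_ciInf_add_ciInf fun μ ν =>
    (arensEells_le base (by rw [map_add, μ.2, ν.2])).trans (pairCost_add_le μ.1 ν.1)

lemma arensEells_smul_le (r : ℝ) (z : FreeL X base) :
    arensEells base (r • z) ≤ ‖r‖ * arensEells base z := by
  rw [arensEells, arensEells, Real.mul_iInf_of_nonneg (norm_nonneg r)]
  refine le_ciInf fun μ => ?_
  rw [Real.norm_eq_abs, ← pairCost_smul]
  exact arensEells_le base (by rw [map_smul, μ.2])

noncomputable def arensEellsSeminorm : Seminorm ℝ (FreeL X base) :=
  .ofSMulLE (arensEells base) (arensEells_zero base) (arensEells_add_le base)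
    (arensEells_smul_le base)

lemma isGoodSeminorm_arensEellsSeminorm : IsGoodSeminorm base (arensEellsSeminorm base) :=
  fun x y => (arensEells_le base (μ := Finsupp.single (x, y) 1) (by simp [pairBoundary])).trans
    (by simp [pairCost])

lemma IsGoodSeminorm.apply_pairBoundary_le {p : Seminorm ℝ (FreeL X base)}
    (hp : IsGoodSeminorm base p) (μ : X × X →₀ ℝ) : p (pairBoundary base μ) ≤ pairCost μ := by
  rw [pairBoundary, Finsupp.linearCombination_apply, pairCost, Finsupp.sum, Finsupp.sum]
  refine (le_sum_of_subadditive p (map_zero p).le (map_add_le_add p) _ _).trans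
    (sum_le_sum fun q _ => ?_)
  rw [map_smul_eq_mul, Real.norm_eq_abs]
  exact mul_le_mul_of_nonneg_left (hp _ _) (abs_nonneg _)

lemma arensEells_le_freeNorm (z : FreeL X base) : arensEells base z ≤ freeNorm base z := by
  obtain ⟨μ, hμ⟩ := pairBoundary_surjective base z
  refine le_ciSup (f := fun p : {p // IsGoodSeminorm base p} => p.1 z) ⟨pairCost μ, ?_⟩
    ⟨arensEellsSeminorm base, isGoodSeminorm_arensEellsSeminorm base⟩
  rintro _ ⟨p, rfl⟩
  exact hμ ▸ p.2.apply_pairBoundary_le base μ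

lemma le_arensEells_of_addGroupSeminorm {A : AddSubgroup (FreeL X base)}
    (hA : A ≤ AddSubgroup.closure (Set.range (δ base))) (η : X → A)
    (hη : ∀ x, (η x : FreeL X base) = δ base x) (p : AddGroupSeminorm A)
    (hp : ∀ x y, p (η x - η y) ≤ dist x y) (a : A) : p a ≤ arensEells base a := by
  let _ := p.toSeminormedAddCommGroup
  refine le_arensEells base fun μ hμ => ?_
  rw [pairBoundary_eq_sum] at hμ
  obtain ⟨m, hm, hcost⟩ := exists_int_combination_eq base (fun p : μ.support => p.1.1)
    (fun p => p.1.2) (fun p => μ p) (hμ ▸ hA a.2)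
  have ha : a = ∑ i, m i • (η i.1.1 - η i.1.2) := by
    ext
    rw [← hμ, ← hm]
    simp [hη]
  have hη_lip : LipschitzWith 1 η := LipschitzWith.of_dist_le_mul fun x y => by
    rw [NNReal.coe_one, one_mul, dist_eq_norm]
    exact hp x y
  calc p a = ‖∑ i, m i • (η i.1.1 - η i.1.2)‖ := by rw [← ha]; rfl
    _ ≤ ∑ i, |(m i : ℝ)| * dist i.1.1 i.1.2 := norm_sum_zsmul_sub_le hη_lip _ _ m
    _ ≤ pairCost μ := hcost.trans_eq (pairCost_eq_sum μ).symm

end FreeL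

/-- The Graev metric `d̄(a,b) = ‖a-b‖` on the free abelian group `A(X) ⊆ L(X)`
is the maximal bi-invariant metric on `A(X)` whose restriction to `X` is
majorized by `d`. -/
theorem graev_metric_maximal
    {X : Type*} [MetricSpace X] (base : X)
    (A : AddSubgroup (FreeL X base))
    (hA : A = AddSubgroup.closure (Set.range (FreeL.δ base)))
    (ρ : A → A → ℝ)
    (hρ_self : ∀ a b : A, ρ a b = 0 ↔ a = b)
    (hρ_symm : ∀ a b : A, ρ a b = ρ b a)
    (hρ_tri : ∀ a b c : A, ρ a c ≤ ρ a b + ρ b c)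
    (hρ_inv : ∀ a b c : A, ρ (a + c) (b + c) = ρ a b)
    (hρ_le : ∀ x y : X,
      ρ ⟨FreeL.δ base x, hA ▸ AddSubgroup.subset_closure ⟨x, rfl⟩⟩
        ⟨FreeL.δ base y, hA ▸ AddSubgroup.subset_closure ⟨y, rfl⟩⟩ ≤ dist x y) :
    ∀ a b : A, ρ a b ≤ FreeL.freeNorm base ((a : FreeL X base) - (b : FreeL X base)) := by
  let p := AddGroupSeminorm.ofTranslationInvariant ρ ((hρ_self 0 0).2 rfl) hρ_symm hρ_tri hρ_inv
  have hp : ∀ a b, p (a - b) = ρ a b := AddGroupSeminorm.ofTranslationInvariant_sub ρ _ _ _ hρ_inv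
  intro a b
  calc ρ a b = p (a - b) := (hp a b).symm
    _ ≤ FreeL.arensEells base (a - b : A) :=
      FreeL.le_arensEells_of_addGroupSeminorm base hA.le
        (fun x => ⟨FreeL.δ base x, hA ▸ AddSubgroup.subset_closure ⟨x, rfl⟩⟩) (fun _ => rfl) p
        (fun x y => (hp _ _).trans_le (hρ_le x y)) (a - b)
    _ ≤ FreeL.freeNorm base (a - b : A) := FreeL.arensEells_le_freeNorm base _
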